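/- (Robbins) A graph G (finite, undirected; parallel edges and self-loops allowed) is 2-edge-connected if and only if G has an ear decomposition. -/

import Mathlib

namespace EdgeOrders

variable {V E V' E' : Type}

/-- A multigraph on vertex type `V` and edge type `E` is given by a map `ends`
sending each edge to the unordered pair of its endpoints (self-loops and
parallel edges are allowed).
`IsWalkSeq ends vs es` states that `vs` is the vertex sequence and `es` the
edge sequence of a walk in this multigraph. -/
inductive IsWalkSeq (ends : E → Sym2 V) : List V → List E → Prop
  | nil (v : V) : IsWalkSeq ends [v] []
  | cons {u v : V} {vs : List V} {e : E} {es : List E} :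
      ends e = s(u, v) → IsWalkSeq ends (v :: vs) es →
      IsWalkSeq ends (u :: v :: vs) (e :: es)

/-- There is a walk from `u` to `v` using only edges from `S`. -/
def HasWalk (ends : E → Sym2 V) (S : Set E) (u v : V) : Prop :=
  ∃ vs es, IsWalkSeq ends vs es ∧ vs.head? = some u ∧ vs.getLast? = some v ∧
    ∀ e ∈ es, e ∈ S

/-- A multigraph is `k`-edge-connected if it has at least two vertices and no
edge-cut of size less than `k`: removing fewer than `k` edges leaves all
vertices connected to each other. -/
def EdgeConnected [Fintype V] [Fintype E] (ends : E → Sym2 V) (k : ℕ) : Prop :=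
  2 ≤ Fintype.card V ∧
    ∀ F : Finset E, F.card < k → ∀ u v : V, HasWalk ends {e | e ∉ F} u v

/-- Two edges are neighbors if they share a common vertex. -/
def Neighbors (ends : E → Sym2 V) (e f : E) : Prop :=
  ∃ x, x ∈ ends e ∧ x ∈ ends f

/-- A (1,1)-edge-order through the (non-self-loop) edge `st` with endpoints
`s` and `t`: a (strict) total order `lt` on `E - {st}` such that `m ≥ 2`,
every edge not incident to `s` has a smaller neighbor and every edge not
incident to `t` has a larger neighbor. -/
def IsOneOneEdgeOrder [Fintype E] (ends : E → Sym2 V) (s t : V) (st : E)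
    (lt : E → E → Prop) : Prop :=
  2 ≤ Fintype.card E ∧
  (∀ e f, lt e f → e ≠ st ∧ f ≠ st) ∧
  (∀ e, ¬ lt e e) ∧
  (∀ e f g, lt e f → lt f g → lt e g) ∧
  (∀ e f, e ≠ st → f ≠ st → e ≠ f → lt e f ∨ lt f e) ∧
  (∀ e, e ≠ st → s ∉ ends e → ∃ f, Neighbors ends e f ∧ lt f e) ∧
  (∀ e, e ≠ st → t ∉ ends e → ∃ f, Neighbors ends e f ∧ lt e f)

/-- An ear: a subgraph given as the vertex sequence and edge sequence of a
walk (a path, or a cycle when the first and last vertices coincide). -/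
structure Ear (V E : Type) where
  verts : List V
  edges : List E

/-- An ear decomposition `(P₀, …, P_len)` of the multigraph given by `ends`:
a sequence of ears partitioning the edge set, where `P₀` is a cycle that is
not a self-loop, and each later ear is either a path intersecting the union
of the previous ears exactly in its two endpoints, or a cycle intersecting it
in a unique vertex. -/
structure EarDecomposition (ends : E → Sym2 V) where
  len : ℕ
  ears : Fin (len + 1) → Ear V E
  /-- every ear is a walk in the graph -/
  walk : ∀ i, IsWalkSeq ends (ears i).verts (ears i).edges
  /-- no ear repeats an edge -/
  edges_nodup : ∀ i, (ears i).edges.Nodup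
  /-- the ears partition the edge set -/
  partition : ∀ e : E, ∃! i, e ∈ (ears i).edges
  /-- the ears cover all vertices (their union is the whole graph) -/
  covers : ∀ v : V, ∃ i, v ∈ (ears i).verts
  /-- every ear contains at least one edge -/
  ear_nonempty : ∀ i, (ears i).edges ≠ []
  /-- `P₀` is a cycle … -/
  first_closed : (ears 0).verts.head? = (ears 0).verts.getLast?
  first_nodup : (ears 0).verts.tail.Nodup
  /-- … that is not a self-loop -/
  first_not_loop : 2 ≤ (ears 0).edges.length
  /-- every later ear is a path (distinct vertices) or a cycle (closed, with
  distinct vertices except for the repeated endpoint) -/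
  ear_path_or_cycle : ∀ i : Fin (len + 1), 0 < (i : ℕ) →
    (ears i).verts.Nodup ∨
      ((ears i).verts.head? = (ears i).verts.getLast? ∧ (ears i).verts.tail.Nodup)
  /-- the endpoint(s) of a later ear lie in the union of the previous ears -/
  ear_endpoints : ∀ i : Fin (len + 1), 0 < (i : ℕ) → ∀ x : V,
    ((ears i).verts.head? = some x ∨ (ears i).verts.getLast? = some x) →
      ∃ j, j < i ∧ x ∈ (ears j).verts
  /-- the inner vertices of a later ear avoid all previous ears -/
  ear_inner_new : ∀ i : Fin (len + 1), 0 < (i : ℕ) →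
    ∀ x ∈ (ears i).verts.tail.dropLast, ∀ j, j < i → x ∉ (ears j).verts

variable {ends : E → Sym2 V}

/-- The vertex set of `G_{i-1} = P₀ ∪ ⋯ ∪ P_{i-1}`. -/
def EarDecomposition.prevVerts (D : EarDecomposition ends) (i : Fin (D.len + 1)) : Set V :=
  {x | ∃ j, j < i ∧ x ∈ (D.ears j).verts}

/-- `inner(P_i)`, the set of inner vertices of the `i`-th ear. -/
def EarDecomposition.innerVerts (D : EarDecomposition ends) (i : Fin (D.len + 1)) : Set V :=
  {x | x ∈ (D.ears i).verts ∧ x ∉ D.prevVerts i}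

/-- The edge set `E - E_i` of `\overline{G_i}`. -/
def EarDecomposition.remEdges (D : EarDecomposition ends) (i : Fin (D.len + 1)) : Set E :=
  {e | ∃ j, i < j ∧ e ∈ (D.ears j).edges}

/-- `birth(e)`: the index of the unique ear containing the edge `e`. -/
noncomputable def EarDecomposition.birthE (D : EarDecomposition ends) (e : E) :
    Fin (D.len + 1) := (D.partition e).exists.choose

open Classical in
/-- `last(v)`: the maximal index `birth(vw)` over all edges `vw` incident to `v`. -/
noncomputable def EarDecomposition.lastV [Fintype E] (D : EarDecomposition ends) (v : V) : ℕ :=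
  (Finset.univ.filter fun e => v ∈ ends e).sup fun e => (D.birthE e : ℕ)

/-- The vertices of the subgraph induced by the edge set `S`. -/
def coverVerts (ends : E → Sym2 V) (S : Set E) : Set V :=
  {v | ∃ e ∈ S, v ∈ ends e}

/-- The subgraph induced by the edge set `S` is connected. -/
def ConnectedOn (ends : E → Sym2 V) (S : Set E) : Prop :=
  ∀ u ∈ coverVerts ends S, ∀ v ∈ coverVerts ends S, HasWalk ends S u v

/-- Definition 4.1: `D` is a (2,1)-edge-order through `rt` avoiding `ru`:
(1) `rt ∈ P₀`; (2) the last ear is the short ear `ru`; (3) non-separateness: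
for every `i < m - n`, `\overline{G_i}` contains all inner vertices of `P_i`
and, if `P_i` is short, at least one endpoint of `P_i`. -/
def IsTwoOneEdgeOrder (D : EarDecomposition ends) (rt ru : E) : Prop :=
  rt ∈ (D.ears 0).edges ∧
  (D.ears (Fin.last D.len)).edges = [ru] ∧
  ∀ i : Fin (D.len + 1), (i : ℕ) < D.len →
    (∀ x ∈ D.innerVerts i, x ∈ coverVerts ends (D.remEdges i)) ∧
    ((D.ears i).edges.length = 1 →
      ∃ x, ((D.ears i).verts.head? = some x ∨ (D.ears i).verts.getLast? = some x) ∧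
        x ∈ coverVerts ends (D.remEdges i))

open Classical in
/-- The degree of a vertex in a multigraph; self-loops count twice. -/
noncomputable def degree [Fintype E] (ends : E → Sym2 V) (v : V) : ℕ :=
  ∑ e : E, (if ends e = s(v, v) then 2 else if v ∈ ends e then 1 else 0)

/-- `T` is the edge set of a tree on the vertex set `W`: all its edges join
vertices of `W`, it connects any two vertices of `W`, and it contains no
nonempty closed trail (i.e. no cycle). -/
def IsTreeOn (ends : E → Sym2 V) (W : Set V) (T : Set E) : Prop :=
  (∀ e ∈ T, ∀ x, x ∈ ends e → x ∈ W) ∧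
  (∀ u ∈ W, ∀ v ∈ W, HasWalk ends T u v) ∧
  (∀ vs es, IsWalkSeq ends vs es → (∀ e ∈ es, e ∈ T) → es.Nodup →
    vs.head? = vs.getLast? → es = [])

/-- `T` is the edge set of a spanning tree of the whole multigraph. -/
def IsSpanningTree (ends : E → Sym2 V) (T : Set E) : Prop :=
  IsTreeOn ends Set.univ T

/-- `(vs, es)` is a (simple) path from `x` to `r` using only edges of `T`. -/
def IsPathIn (ends : E → Sym2 V) (T : Set E) (x r : V)
    (vs : List V) (es : List E) : Prop :=
  IsWalkSeq ends vs es ∧ vs.Nodup ∧ vs.head? = some x ∧ vs.getLast? = some r ∧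
    ∀ e ∈ es, e ∈ T

/-- The paths from `x` to the common root `r` inside `T₁` and inside `T₂` are
edge-disjoint. -/
def EdgeIndepFrom (ends : E → Sym2 V) (T₁ T₂ : Set E) (r x : V) : Prop :=
  ∀ vs₁ es₁ vs₂ es₂, IsPathIn ends T₁ x r vs₁ es₁ → IsPathIn ends T₂ x r vs₂ es₂ →
    ∀ e ∈ es₁, e ∉ es₂

/-!
If `D` is an ear decomposition and `f` an edge, every ear is a trail, so each of its vertices
reaches one of the two ends of the ear without using `f`; as the ends of a later ear lie on
earlier ears and `P₀` is closed, induction along the ears connects every vertex to the first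
vertex of `P₀` in `G - f`.

Conversely, let `G` be 2-edge-connected. A non-loop edge `yx` together with a path from `x` to
`y` avoiding it is a first ear. Among all partial ear decompositions take one whose edge set
`S` is maximal. If some edge is missing, connectivity yields a missing edge `xy` with `x`
covered by `S`; as `xy` is no bridge there is a path from `y` back to `x` avoiding it, and
stopping it at its first covered vertex closes `xy` up into a new ear, contradicting maximality.
-/

namespace IsWalkSeq

variable {vs : List V} {es : List E}

theorem ne_nil (h : IsWalkSeq ends vs es) : vs ≠ [] := by
  cases h <;> simp

theorem length_eq (h : IsWalkSeq ends vs es) : vs.length = es.length + 1 := by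
  induction h with
  | nil => rfl
  | cons _ _ ih => simp [ih]

theorem exists_head? (h : IsWalkSeq ends vs es) : ∃ a, vs.head? = some a := by
  cases h <;> simp

theorem exists_getLast? (h : IsWalkSeq ends vs es) : ∃ a, vs.getLast? = some a :=
  Option.isSome_iff_exists.1 (List.getLast?_isSome.2 h.ne_nil)

theorem append {vs' : List V} {es' : List E} {x : V} (h : IsWalkSeq ends vs es)
    (hl : vs.getLast? = some x) (h' : IsWalkSeq ends (x :: vs') es') :
    IsWalkSeq ends (vs ++ vs') (es ++ es') := by
  induction h with
  | nil v =>
    obtain rfl : v = x := by simpa using hl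
    simpa using h'
  | cons he _ ih => exact .cons he (ih (by simpa using hl))

theorem reverse (h : IsWalkSeq ends vs es) : IsWalkSeq ends vs.reverse es.reverse := by
  induction h with
  | nil v => exact .nil v
  | @cons u v vs e es he hw ih =>
    simpa using ih.append (x := v) (by simp) (.cons (by rw [he, Sym2.eq_swap]) (.nil u))

theorem mem_of_mem_ends {e : E} {x : V} (h : IsWalkSeq ends vs es) (he : e ∈ es)
    (hx : x ∈ ends e) : x ∈ vs := by
  induction h with
  | nil => simp at he
  | cons he' _ ih =>
    rcases List.mem_cons.1 he with rfl | he
    · rw [he'] at hx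
      rcases Sym2.mem_iff.1 hx with rfl | rfl <;> simp
    · exact List.mem_cons_of_mem _ (ih he)

theorem exists_mem_ends_of_mem (h : IsWalkSeq ends vs es) (hes : es ≠ []) {x : V}
    (hx : x ∈ vs) : ∃ e ∈ es, x ∈ ends e := by
  induction h with
  | nil => simp at hes
  | @cons u v vs e es he hw ih =>
    rcases List.mem_cons.1 hx with rfl | hx
    · exact ⟨e, by simp, by simp [he]⟩
    · by_cases hes : es = []
      · subst hes
        cases hw
        obtain rfl : x = v := by simpa using hx
        exact ⟨e, by simp, by simp [he]⟩
      · obtain ⟨f, hf, hxf⟩ := ih hes hx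
        exact ⟨f, List.mem_cons_of_mem _ hf, hxf⟩

theorem exists_mem_ends_mem_dropLast {e : E} (h : IsWalkSeq ends vs es) (he : e ∈ es) :
    ∃ x ∈ ends e, x ∈ vs.dropLast := by
  induction h with
  | nil => simp at he
  | @cons u v vs e' es he' hw ih =>
    rw [List.dropLast_cons_of_ne_nil hw.ne_nil]
    rcases List.mem_cons.1 he with rfl | he
    · exact ⟨u, by simp [he'], by simp⟩
    · obtain ⟨x, hx, hxd⟩ := ih he
      exact ⟨x, hx, List.mem_cons_of_mem _ hxd⟩

theorem nodup_edges (h : IsWalkSeq ends vs es) (hn : vs.Nodup) : es.Nodup := by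
  induction h with
  | nil => simp
  | @cons u v vs e es he hw ih =>
    rw [List.nodup_cons] at hn
    exact List.nodup_cons.2
      ⟨fun hes => hn.1 (hw.mem_of_mem_ends hes (by simp [he])), ih hn.2⟩

theorem split {x : V} (h : IsWalkSeq ends vs es) (hx : x ∈ vs) :
    ∃ vs₁ vs₂ es₁ es₂, vs = vs₁ ++ x :: vs₂ ∧ es = es₁ ++ es₂ ∧
      IsWalkSeq ends (vs₁ ++ [x]) es₁ ∧ IsWalkSeq ends (x :: vs₂) es₂ := by
  induction h with
  | nil v =>
    obtain rfl : x = v := by simpa using hx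
    exact ⟨[], [], [], [], by simp, by simp, .nil x, .nil x⟩
  | @cons u v vs e es he hw ih =>
    rcases List.mem_cons.1 hx with rfl | hx
    · exact ⟨[], v :: vs, [], e :: es, by simp, by simp, .nil x, .cons he hw⟩
    · obtain ⟨vs₁, vs₂, es₁, es₂, hvs, rfl, w₁, w₂⟩ := ih hx
      refine ⟨u :: vs₁, vs₂, e :: es₁, es₂, by simp [hvs], rfl, ?_, w₂⟩
      cases vs₁ <;> obtain ⟨rfl, -⟩ := List.cons_eq_cons.1 hvs <;> exact .cons he w₁

theorem exists_nodup (h : IsWalkSeq ends vs es) :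
    ∃ vs' es', IsWalkSeq ends vs' es' ∧ vs'.head? = vs.head? ∧
      vs'.getLast? = vs.getLast? ∧ vs'.Nodup ∧ (∀ e ∈ es', e ∈ es) := by
  induction h with
  | nil v => exact ⟨[v], [], .nil v, rfl, rfl, by simp, by simp⟩
  | @cons u v vs e es he hw ih =>
    obtain ⟨vs', es', w, hh, hl, hn, hsub⟩ := ih
    by_cases hu : u ∈ vs'
    · -- shortcut the loop from `u` back to `u`
      obtain ⟨vs₁, vs₂, es₁, es₂, rfl, rfl, -, w₂⟩ := w.split hu
      refine ⟨u :: vs₂, es₂, w₂, rfl, ?_, hn.of_append_right, ?_⟩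
      · rw [List.getLast?_cons_cons, ← hl, List.getLast?_append_of_ne_nil _ (by simp)]
      · exact fun f hf => List.mem_cons_of_mem _ (hsub f (List.mem_append_right _ hf))
    · obtain ⟨a, t, rfl⟩ := List.exists_cons_of_ne_nil w.ne_nil
      obtain rfl : a = v := by simpa using hh
      refine ⟨u :: a :: t, e :: es', .cons he w, rfl, by simpa using hl,
        List.nodup_cons.2 ⟨hu, hn⟩, ?_⟩
      simpa using fun f hf => Or.inr (hsub f hf)

theorem exists_prefix_first_mem {c : V} (C : Set V) (h : IsWalkSeq ends vs es)
    (hl : vs.getLast? = some c) (hc : c ∈ C) :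
    ∃ vs' es' z, IsWalkSeq ends vs' es' ∧ vs'.head? = vs.head? ∧
      vs'.getLast? = some z ∧ z ∈ C ∧ (∀ x ∈ vs'.dropLast, x ∉ C) ∧
      vs' <+: vs ∧ es' <+: es := by
  induction h with
  | nil v =>
    obtain rfl : v = c := by simpa using hl
    exact ⟨[v], [], v, .nil v, rfl, rfl, hc, by simp, List.prefix_refl _, List.prefix_refl _⟩
  | @cons u v vs e es he hw ih =>
    by_cases hu : u ∈ C
    · exact ⟨[u], [], u, .nil u, rfl, rfl, hu, by simp, by simp, by simp⟩
    · obtain ⟨vs', es', z, w, hh, hzl, hz, hdrop, hpre, hepre⟩ := ih (by simpa using hl)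
      obtain ⟨a, t, rfl⟩ := List.exists_cons_of_ne_nil w.ne_nil
      obtain rfl : a = v := by simpa using hh
      refine ⟨u :: a :: t, e :: es', z, .cons he w, rfl, by simpa using hzl, hz, ?_,
        (List.prefix_cons_inj u).2 hpre, (List.prefix_cons_inj e).2 hepre⟩
      rw [List.dropLast_cons_of_ne_nil (by simp)]
      intro x hx
      rcases List.mem_cons.1 hx with rfl | hx
      exacts [hu, hdrop x hx]

theorem exists_edge_into {a c : V} (C : Set V) (h : IsWalkSeq ends vs es)
    (hh : vs.head? = some a) (ha : a ∉ C) (hl : vs.getLast? = some c) (hc : c ∈ C) :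
    ∃ e w z, ends e = s(w, z) ∧ w ∉ C ∧ z ∈ C := by
  induction h generalizing a with
  | nil v =>
    obtain rfl : v = a := by simpa using hh
    exact absurd (by simpa using hl) (ne_of_mem_of_not_mem hc ha).symm
  | @cons u v vs e es he hw ih =>
    obtain rfl : u = a := by simpa using hh
    by_cases hv : v ∈ C
    · exact ⟨e, u, v, he, ha, hv⟩
    · exact ih rfl hv (by simpa using hl)

/-- The end on the side of `x` that does not contain `f` will do. -/
theorem exists_hasWalk_end {x : V} (h : IsWalkSeq ends vs es) (hnd : es.Nodup)
    (hx : x ∈ vs) (f : E) :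
    ∃ y, (vs.head? = some y ∨ vs.getLast? = some y) ∧
      HasWalk ends {e | e ∈ es ∧ e ≠ f} x y := by
  obtain ⟨vs₁, vs₂, es₁, es₂, rfl, rfl, w₁, w₂⟩ := h.split hx
  obtain ⟨a, ha⟩ := w₁.exists_head?
  obtain ⟨b, hb⟩ := w₂.exists_getLast?
  by_cases hf : f ∈ es₁
  · refine ⟨b, Or.inr (by simpa [List.getLast?_append_of_ne_nil] using hb),
      x :: vs₂, es₂, w₂, rfl, hb, fun e he => ⟨List.mem_append_right _ he, ?_⟩⟩
    rintro rfl
    exact List.disjoint_of_nodup_append hnd hf he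
  · refine ⟨a, Or.inl ?_, (vs₁ ++ [x]).reverse, es₁.reverse, w₁.reverse, by simp,
      by rwa [List.getLast?_reverse], fun e he => ?_⟩
    · cases vs₁ <;> simpa using ha
    · rw [List.mem_reverse] at he
      exact ⟨List.mem_append_left _ he, fun hef => hf (hef ▸ he)⟩

end IsWalkSeq

namespace HasWalk

variable {S : Set E} {u v w : V}

theorem refl (S : Set E) (u : V) : HasWalk ends S u u :=
  ⟨[u], [], .nil u, rfl, rfl, by simp⟩

theorem symm (h : HasWalk ends S u v) : HasWalk ends S v u := by
  obtain ⟨vs, es, hw, hh, hl, hS⟩ := h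
  exact ⟨vs.reverse, es.reverse, hw.reverse, by simpa using hl, by simpa using hh,
    fun e he => hS e (List.mem_reverse.1 he)⟩

theorem trans (h₁ : HasWalk ends S u v) (h₂ : HasWalk ends S v w) : HasWalk ends S u w := by
  obtain ⟨vs₁, es₁, w₁, hh₁, hl₁, hS₁⟩ := h₁
  obtain ⟨vs₂, es₂, w₂, hh₂, hl₂, hS₂⟩ := h₂
  obtain ⟨a, t, rfl⟩ := List.exists_cons_of_ne_nil w₂.ne_nil
  obtain rfl : a = v := by simpa using hh₂
  refine ⟨vs₁ ++ t, es₁ ++ es₂, w₁.append hl₁ w₂, ?_, ?_, ?_⟩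
  · obtain ⟨b, s, rfl⟩ := List.exists_cons_of_ne_nil w₁.ne_nil
    simpa using hh₁
  · by_cases ht : t = []
    · subst ht
      simpa [← hl₂] using hl₁
    · rwa [List.getLast?_append_of_ne_nil _ ht, ← List.getLast?_cons_of_ne_nil ht]
  · simpa [or_imp, forall_and] using ⟨hS₁, hS₂⟩

theorem mono {S' : Set E} (hS : S ⊆ S') (h : HasWalk ends S u v) : HasWalk ends S' u v := by
  obtain ⟨vs, es, hw, hh, hl, hmem⟩ := h
  exact ⟨vs, es, hw, hh, hl, fun e he => hS (hmem e he)⟩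

end HasWalk

namespace EarDecomposition

theorem two_le_card [Fintype V] (D : EarDecomposition ends) : 2 ≤ Fintype.card V := by
  obtain ⟨a, b, c, t, hv⟩ : ∃ a b c t, (D.ears 0).verts = a :: b :: c :: t := by
    have hlen := (D.walk 0).length_eq
    have := D.first_not_loop
    match hv : (D.ears 0).verts with
    | a :: b :: c :: t => exact ⟨a, b, c, t, rfl⟩
    | [] | [_] | [_, _] => simp only [hv, List.length_cons, List.length_nil] at hlen; omega
  have hnd := D.first_nodup
  rw [hv, List.tail_cons, List.nodup_cons, List.mem_cons, not_or] at hnd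
  exact Fintype.one_lt_card_iff.2 ⟨b, c, hnd.1.1⟩

theorem hasWalk_of_mem_verts (D : EarDecomposition ends) {v₀ : V}
    (hv₀ : (D.ears 0).verts.head? = some v₀) (f : E) (i : Fin (D.len + 1)) {x : V}
    (hx : x ∈ (D.ears i).verts) :
    HasWalk ends {e | e ≠ f} x v₀ := by
  induction i using WellFoundedLT.induction generalizing x with
  | _ i ih =>
    obtain ⟨y, hy, hxy⟩ := (D.walk i).exists_hasWalk_end (D.edges_nodup i) hx f
    refine (hxy.mono fun e he => he.2).trans ?_
    rcases Nat.eq_zero_or_pos i with hi | hi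
    · obtain rfl : i = 0 := Fin.ext hi
      rw [← D.first_closed, or_self, hv₀, Option.some_inj] at hy
      exact hy ▸ .refl _ _
    · obtain ⟨j, hj, hyj⟩ := D.ear_endpoints i hi y hy
      exact ih j hj hyj

theorem edgeConnected [Fintype V] [Fintype E] (D : EarDecomposition ends) :
    EdgeConnected ends 2 := by
  refine ⟨D.two_le_card, fun F hF u v => ?_⟩
  obtain ⟨e, -⟩ := List.exists_mem_of_ne_nil _ (D.ear_nonempty 0)
  have : Nonempty E := ⟨e⟩
  obtain ⟨f, hf⟩ := Finset.card_le_one_iff_subset_singleton.1 (Nat.lt_succ_iff.1 hF)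
  have hS : {e | e ≠ f} ⊆ {e | e ∉ F} := fun e he heF => he (by simpa using hf heF)
  obtain ⟨v₀, hv₀⟩ := (D.walk 0).exists_head?
  obtain ⟨i, hu⟩ := D.covers u
  obtain ⟨j, hv⟩ := D.covers v
  exact ((D.hasWalk_of_mem_verts hv₀ f i hu).trans
    (D.hasWalk_of_mem_verts hv₀ f j hv).symm).mono hS

end EarDecomposition

theorem List.nodup_or_closed_cons {α : Type*} {x : α} {ys : List α} (hys : ys.Nodup)
    (hx : x ∉ ys.dropLast) :
    (x :: ys).Nodup ∨ ((x :: ys).head? = (x :: ys).getLast? ∧ (x :: ys).tail.Nodup) := by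
  by_cases hmem : x ∈ ys
  · right
    obtain rfl | ⟨l, a, rfl⟩ := ys.eq_nil_or_concat
    · simp at hmem
    · simp only [List.concat_eq_append, List.dropLast_concat, List.mem_append,
        List.mem_singleton] at hx hmem hys
      obtain rfl := hmem.resolve_left hx
      simpa [List.getLast?_cons_of_ne_nil] using hys
  · exact Or.inl (List.nodup_cons.2 ⟨hmem, hys⟩)

/-- `N` is a path or cycle attachable as a new ear to the graph with vertices `C`, edges `S`. -/
structure IsEarOn (ends : E → Sym2 V) (C : Set V) (S : Set E) (N : Ear V E) : Prop where
  walk : IsWalkSeq ends N.verts N.edges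
  edges_nodup : N.edges.Nodup
  edges_ne_nil : N.edges ≠ []
  edges_not_mem : ∀ e ∈ N.edges, e ∉ S
  path_or_cycle : N.verts.Nodup ∨ (N.verts.head? = N.verts.getLast? ∧ N.verts.tail.Nodup)
  ends_mem : ∀ x, (N.verts.head? = some x ∨ N.verts.getLast? = some x) → x ∈ C
  inner_not_mem : ∀ x ∈ N.verts.tail.dropLast, x ∉ C

structure PartialEarDecomposition (ends : E → Sym2 V) (S : Set E) where
  len : ℕ
  ears : Fin (len + 1) → Ear V E
  walk : ∀ i, IsWalkSeq ends (ears i).verts (ears i).edges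
  edges_nodup : ∀ i, (ears i).edges.Nodup
  mem_of_mem_edges : ∀ i, ∀ e ∈ (ears i).edges, e ∈ S
  partition : ∀ e ∈ S, ∃! i, e ∈ (ears i).edges
  ear_nonempty : ∀ i, (ears i).edges ≠ []
  first_closed : (ears 0).verts.head? = (ears 0).verts.getLast?
  first_nodup : (ears 0).verts.tail.Nodup
  first_not_loop : 2 ≤ (ears 0).edges.length
  ear_path_or_cycle : ∀ i : Fin (len + 1), 0 < (i : ℕ) →
    (ears i).verts.Nodup ∨
      ((ears i).verts.head? = (ears i).verts.getLast? ∧ (ears i).verts.tail.Nodup)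
  ear_endpoints : ∀ i : Fin (len + 1), 0 < (i : ℕ) → ∀ x : V,
    ((ears i).verts.head? = some x ∨ (ears i).verts.getLast? = some x) →
      ∃ j, j < i ∧ x ∈ (ears j).verts
  ear_inner_new : ∀ i : Fin (len + 1), 0 < (i : ℕ) →
    ∀ x ∈ (ears i).verts.tail.dropLast, ∀ j, j < i → x ∉ (ears j).verts

namespace PartialEarDecomposition

variable {S : Set E}

def ofCycle (N : Ear V E) (hw : IsWalkSeq ends N.verts N.edges) (hnd : N.edges.Nodup)
    (hclosed : N.verts.head? = N.verts.getLast?) (htail : N.verts.tail.Nodup)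
    (hlen : 2 ≤ N.edges.length) : PartialEarDecomposition ends {e | e ∈ N.edges} where
  len := 0
  ears _ := N
  walk _ := hw
  edges_nodup _ := hnd
  mem_of_mem_edges _ _ := id
  partition _ he := ⟨0, he, fun i _ => Fin.ext (Nat.lt_one_iff.1 i.isLt)⟩
  ear_nonempty _ := List.ne_nil_of_length_pos (by omega)
  first_closed := hclosed
  first_nodup := htail
  first_not_loop := hlen
  ear_path_or_cycle i hi := absurd hi (by omega)
  ear_endpoints i hi := absurd hi (by omega)
  ear_inner_new i hi := absurd hi (by omega)

theorem nonempty (P : PartialEarDecomposition ends S) : S.Nonempty := by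
  obtain ⟨e, he⟩ := List.exists_mem_of_ne_nil _ (P.ear_nonempty 0)
  exact ⟨e, P.mem_of_mem_edges 0 e he⟩

theorem mem_coverVerts (P : PartialEarDecomposition ends S) {i : Fin (P.len + 1)} {v : V}
    (hv : v ∈ (P.ears i).verts) : v ∈ coverVerts ends S := by
  obtain ⟨e, he, hve⟩ := (P.walk i).exists_mem_ends_of_mem (P.ear_nonempty i) hv
  exact ⟨e, P.mem_of_mem_edges i e he, hve⟩

theorem exists_mem_verts (P : PartialEarDecomposition ends S) {v : V}
    (hv : v ∈ coverVerts ends S) : ∃ i, v ∈ (P.ears i).verts := by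
  obtain ⟨e, he, hve⟩ := hv
  obtain ⟨i, hi, -⟩ := P.partition e he
  exact ⟨i, (P.walk i).mem_of_mem_ends hi hve⟩

def snoc (P : PartialEarDecomposition ends S) (N : Ear V E)
    (hN : IsEarOn ends (coverVerts ends S) S N) :
    PartialEarDecomposition ends (S ∪ {e | e ∈ N.edges}) where
  len := P.len + 1
  ears := Fin.snoc P.ears N
  walk := Fin.lastCases (by simpa using hN.walk) fun i => by simpa using P.walk i
  edges_nodup := Fin.lastCases (by simpa using hN.edges_nodup) fun i => by
    simpa using P.edges_nodup i
  mem_of_mem_edges := Fin.lastCases (fun e he => Or.inr (by simpa using he)) fun i e he => by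
    simp only [Fin.snoc_castSucc] at he
    exact Or.inl (P.mem_of_mem_edges i e he)
  partition e he := by
    rcases he with he | he
    · obtain ⟨i, hi, huniq⟩ := P.partition e he
      refine ⟨i.castSucc, by simpa using hi, Fin.lastCases (fun h => ?_) fun j h => ?_⟩
      · exact absurd he (hN.edges_not_mem e (by simpa using h))
      · rw [huniq j (by simpa using h)]
    · refine ⟨Fin.last _, by simpa using he, Fin.lastCases (fun _ => rfl) fun j h => ?_⟩
      exact absurd (P.mem_of_mem_edges j e (by simpa using h)) (hN.edges_not_mem e he)
  ear_nonempty := Fin.lastCases (by simpa using hN.edges_ne_nil) fun i => by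
    simpa using P.ear_nonempty i
  first_closed := by rw [← Fin.castSucc_zero, Fin.snoc_castSucc]; exact P.first_closed
  first_nodup := by rw [← Fin.castSucc_zero, Fin.snoc_castSucc]; exact P.first_nodup
  first_not_loop := by rw [← Fin.castSucc_zero, Fin.snoc_castSucc]; exact P.first_not_loop
  ear_path_or_cycle := Fin.lastCases (fun _ => by simpa using hN.path_or_cycle)
    fun i hi => by simpa using P.ear_path_or_cycle i (by simpa using hi)
  ear_endpoints := Fin.lastCases
    (fun _ x hx => by
      obtain ⟨j, hj⟩ := P.exists_mem_verts (hN.ends_mem x (by simpa using hx))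
      exact ⟨j.castSucc, Fin.castSucc_lt_last j, by simpa using hj⟩)
    fun i hi x hx => by
      obtain ⟨j, hj, hxj⟩ := P.ear_endpoints i (by simpa using hi) x (by simpa using hx)
      exact ⟨j.castSucc, by simpa using hj, by simpa using hxj⟩
  ear_inner_new := Fin.lastCases
    (fun _ x hx => Fin.lastCases (fun h => absurd h (lt_irrefl _)) fun j _ hxj =>
      hN.inner_not_mem x (by simpa using hx) (P.mem_coverVerts (by simpa using hxj)))
    fun i hi x hx => Fin.lastCases (fun h => absurd h (not_lt.2 (Fin.le_last _))) fun j hj => by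
      simpa using
        P.ear_inner_new i (by simpa using hi) x (by simpa using hx) j (by simpa using hj)

def toEarDecomposition (P : PartialEarDecomposition ends Set.univ)
    (hv : ∀ v, ∃ e, v ∈ ends e) : EarDecomposition ends where
  len := P.len
  ears := P.ears
  walk := P.walk
  edges_nodup := P.edges_nodup
  partition e := P.partition e trivial
  covers v := by
    obtain ⟨e, he⟩ := hv v
    exact P.exists_mem_verts ⟨e, trivial, he⟩
  ear_nonempty := P.ear_nonempty
  first_closed := P.first_closed
  first_nodup := P.first_nodup
  first_not_loop := P.first_not_loop
  ear_path_or_cycle := P.ear_path_or_cycle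
  ear_endpoints := P.ear_endpoints
  ear_inner_new := P.ear_inner_new

end PartialEarDecomposition

section EdgeConnected

variable [Fintype V] [Fintype E]

theorem EdgeConnected.exists_mem_ends {k : ℕ} (hc : EdgeConnected ends k) (hk : 0 < k)
    (v : V) : ∃ e, v ∈ ends e := by
  obtain ⟨u, hu⟩ := Fintype.exists_ne_of_one_lt_card hc.1 v
  obtain ⟨vs, es, hw, hh, hl, -⟩ := hc.2 ∅ (by simpa using hk) v u
  have hes : es ≠ [] := by
    rintro rfl
    cases hw
    exact hu (by simpa using hl.symm.trans hh)
  obtain ⟨e, -, hv⟩ := hw.exists_mem_ends_of_mem hes (List.mem_of_mem_head? hh)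
  exact ⟨e, hv⟩

theorem EdgeConnected.exists_ear_through (hc : EdgeConnected ends 2) {C : Set V}
    {S : Set E} (hS : ∀ e ∈ S, ∀ w ∈ ends e, w ∈ C) {f : E} {x y : V} (hf : f ∉ S)
    (hxy : ends f = s(x, y)) (hx : x ∈ C) :
    ∃ t es, IsEarOn ends C S ⟨x :: y :: t, f :: es⟩ := by
  obtain ⟨vs, es, hw, hh, hl, hes⟩ := hc.2 {f} (by simp) y x
  obtain ⟨vs₁, es₁, hw₁, hh₁, hl₁, hnd₁, hes₁⟩ := hw.exists_nodup
  obtain ⟨vs₂, es₂, z, hw₂, hh₂, hl₂, hz, hdrop, hpre, hepre⟩ :=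
    hw₁.exists_prefix_first_mem C (hl₁.trans hl) hx
  obtain ⟨a, t, rfl⟩ := List.exists_cons_of_ne_nil hw₂.ne_nil
  obtain rfl : a = y := by simpa [hh₁, hh] using hh₂
  have hnd₂ : (a :: t).Nodup := hnd₁.sublist hpre.sublist
  have hf₂ : f ∉ es₂ := fun h => by simpa using hes f (hes₁ f (hepre.sublist.subset h))
  refine ⟨t, es₂, .cons hxy hw₂, List.nodup_cons.2 ⟨hf₂, hw₂.nodup_edges hnd₂⟩, by simp,
    ?_, List.nodup_or_closed_cons hnd₂ fun h => hdrop x h hx, ?_, by simpa using hdrop⟩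
  · -- each edge of the path back to `C` has an end outside `C`, so it is not in `S`
    intro e he heS
    rcases List.mem_cons.1 he with rfl | he
    · exact hf heS
    · obtain ⟨w, hw, hwd⟩ := hw₂.exists_mem_ends_mem_dropLast he
      exact hdrop w hwd (hS e heS w hw)
  · rintro w (hw | hw)
    · obtain rfl : x = w := by simpa using hw
      exact hx
    · obtain rfl : z = w := by simpa [hl₂] using hw
      exact hz

theorem EdgeConnected.exists_edge_at_coverVerts {k : ℕ} (hc : EdgeConnected ends k)
    (hk : 0 < k) {S : Set E} (hS : S.Nonempty) {e : E} (he : e ∉ S) :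
    ∃ f x y, f ∉ S ∧ ends f = s(x, y) ∧ x ∈ coverVerts ends S := by
  obtain ⟨b, hab⟩ := Sym2.mem_iff_exists.1 (Sym2.out_fst_mem (ends e))
  set a := (ends e).out.1
  by_cases ha : a ∈ coverVerts ends S
  · exact ⟨e, a, b, he, hab, ha⟩
  obtain ⟨e₀, he₀⟩ := hS
  have hc₀ : (ends e₀).out.1 ∈ coverVerts ends S := ⟨e₀, he₀, Sym2.out_fst_mem _⟩
  obtain ⟨vs, es, hw, hh, hl, -⟩ := hc.2 ∅ (by simpa using hk) a (ends e₀).out.1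
  obtain ⟨f, w, z, hwz, hw, hz⟩ := hw.exists_edge_into _ hh ha hl hc₀
  exact ⟨f, z, w, fun hf => hw ⟨f, hf, by simp [hwz]⟩, hwz.trans Sym2.eq_swap, hz⟩

theorem EdgeConnected.exists_partialEarDecomposition (hc : EdgeConnected ends 2) :
    ∃ S, Nonempty (PartialEarDecomposition ends S) := by
  obtain ⟨u, v, huv⟩ := Fintype.one_lt_card_iff.1 hc.1
  obtain ⟨vs, es, hw, hh, hl, -⟩ := hc.2 ∅ (by simp) u v
  obtain ⟨f, y, x, hyx, hy, rfl⟩ := hw.exists_edge_into {v} hh huv hl rfl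
  obtain ⟨t, es, hN⟩ := hc.exists_ear_through (S := ∅) (C := {x}) (by simp) (by simp)
    (hyx.trans Sym2.eq_swap) rfl
  have hlast : (x :: y :: t).getLast? = some x := by
    obtain ⟨z, hz⟩ := hN.walk.exists_getLast?
    rw [hz, hN.ends_mem z (Or.inr hz)]
  have ht : t ≠ [] := by
    rintro rfl
    exact hy (by simpa using hlast)
  have hcycle := hN.path_or_cycle.resolve_left fun hnd =>
    (List.nodup_cons.1 hnd).1 (List.mem_of_getLast? (by rwa [List.getLast?_cons_cons] at hlast))
  have hlen : 2 ≤ (f :: es).length := by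
    have := hN.walk.length_eq
    obtain ⟨a, t', rfl⟩ := List.exists_cons_of_ne_nil ht
    simp only [List.length_cons] at this ⊢
    omega
  exact ⟨_, ⟨.ofCycle _ hN.walk hN.edges_nodup hcycle.1 hcycle.2 hlen⟩⟩

theorem EdgeConnected.nonempty_earDecomposition (hc : EdgeConnected ends 2) :
    Nonempty (EarDecomposition ends) := by
  obtain ⟨S, ⟨P⟩, hmax⟩ :=
    (Set.toFinite {S : Set E | Nonempty (PartialEarDecomposition ends S)}).exists_maximal
      hc.exists_partialEarDecomposition
  obtain rfl : S = Set.univ := by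
    refine Set.eq_univ_of_forall fun e => by_contra fun he => ?_
    obtain ⟨f, x, y, hf, hxy, hx⟩ := hc.exists_edge_at_coverVerts two_pos P.nonempty he
    obtain ⟨t, es, hN⟩ := hc.exists_ear_through (C := coverVerts ends S)
      (fun e he w hw => ⟨e, he, hw⟩) hf hxy hx
    exact hf (hmax ⟨P.snoc _ hN⟩ Set.subset_union_left (Or.inr (List.mem_cons_self ..)))
  exact ⟨P.toEarDecomposition (hc.exists_mem_ends two_pos)⟩

end EdgeConnected

/-- **Robbins.** A multigraph is 2-edge-connected if and only
if it has an ear decomposition. -/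
theorem statement_15 {V E : Type} [Fintype V] [Fintype E] (ends : E → Sym2 V) :
    EdgeConnected ends 2 ↔ Nonempty (EarDecomposition ends) :=
  ⟨EdgeConnected.nonempty_earDecomposition, fun ⟨D⟩ => D.edgeConnected⟩

end EdgeOrders
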